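/- arXiv:1306.6569 — 2 statements merged into one kernel-verified Lean document; each statement's English description precedes it below -/
import Mathlib

section
/- (Strong comparison of stationary states) If x, z ∈ X_pq are both stationary configurations with x ≤ z and x ≠ z, then x ≺ z, i.e. x_k < z_k for every k ∈ ℤ. In particular, two distinct stationary configurations that agree at some index are incomparable. -/
/-- First partial derivative of the generating function. -/
noncomputable def pd1 (h : ℝ → ℝ → ℝ) (a b : ℝ) : ℝ := deriv (fun s => h s b) a

/-- Second partial derivative of the generating function. -/
noncomputable def pd2 (h : ℝ → ℝ → ℝ) (a b : ℝ) : ℝ := deriv (fun s => h a s) b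

/-- Mixed second partial derivative ∂₁∂₂h. -/
noncomputable def pd12 (h : ℝ → ℝ → ℝ) (a b : ℝ) : ℝ := deriv (fun s => pd2 h s b) a

/-- The space of (p,q)-configurations: x (n+q) = x n + p. -/
def IsConfig (p : ℤ) (q : ℕ) (x : ℤ → ℝ) : Prop := ∀ n : ℤ, x (n + (q : ℤ)) = x n + (p : ℝ)

/-- Stationary configuration: the gradient of the action vanishes. -/
def Stationary (h : ℝ → ℝ → ℝ) (x : ℤ → ℝ) : Prop :=
  ∀ k : ℤ, pd2 h (x (k - 1)) (x k) + pd1 h (x k) (x (k + 1)) = 0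

section Aux

variable {h : ℝ → ℝ → ℝ}

lemma curve1_hasDerivAt (b a : ℝ) : HasDerivAt (fun s : ℝ => (s, b)) ((1 : ℝ), (0 : ℝ)) a :=
  HasDerivAt.prodMk (hasDerivAt_id a) (hasDerivAt_const a b)

lemma curve2_hasDerivAt (a b : ℝ) : HasDerivAt (fun t : ℝ => (a, t)) ((0 : ℝ), (1 : ℝ)) b :=
  HasDerivAt.prodMk (hasDerivAt_const b a) (hasDerivAt_id b)

lemma pd1_eq (hC2 : ContDiff ℝ 2 (Function.uncurry h)) (a b : ℝ) :
    pd1 h a b = fderiv ℝ (Function.uncurry h) (a, b) (1, 0) := by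
  have hd : DifferentiableAt ℝ (Function.uncurry h) (a, b) :=
    (hC2.differentiable (by norm_num)).differentiableAt
  exact (hd.hasFDerivAt.comp_hasDerivAt a (curve1_hasDerivAt b a)).deriv

lemma pd2_eq (hC2 : ContDiff ℝ 2 (Function.uncurry h)) (a b : ℝ) :
    pd2 h a b = fderiv ℝ (Function.uncurry h) (a, b) (0, 1) := by
  have hd : DifferentiableAt ℝ (Function.uncurry h) (a, b) :=
    (hC2.differentiable (by norm_num)).differentiableAt
  exact (hd.hasFDerivAt.comp_hasDerivAt b (curve2_hasDerivAt a b)).deriv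

lemma hasDerivAt_pd2_fst (hC2 : ContDiff ℝ 2 (Function.uncurry h)) (a b : ℝ) :
    HasDerivAt (fun s => pd2 h s b)
      ((fderiv ℝ (fderiv ℝ (Function.uncurry h)) (a, b) (1, 0)) (0, 1)) a := by
  have hF : ContDiff ℝ 1 (fderiv ℝ (Function.uncurry h)) :=
    hC2.fderiv_right (by norm_num)
  have hFd : DifferentiableAt ℝ (fderiv ℝ (Function.uncurry h)) (a, b) :=
    (hF.differentiable (by norm_num)).differentiableAt
  have h1 : HasDerivAt (fun s : ℝ => fderiv ℝ (Function.uncurry h) (s, b))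
      (fderiv ℝ (fderiv ℝ (Function.uncurry h)) (a, b) (1, 0)) a :=
    hFd.hasFDerivAt.comp_hasDerivAt a (curve1_hasDerivAt b a)
  have h2 := (ContinuousLinearMap.apply ℝ ℝ ((0 : ℝ), (1 : ℝ))).hasFDerivAt.comp_hasDerivAt a h1
  exact h2.congr_of_eventuallyEq (Filter.Eventually.of_forall fun s => pd2_eq hC2 s b)

lemma pd12_eq (hC2 : ContDiff ℝ 2 (Function.uncurry h)) (a b : ℝ) :
    pd12 h a b = (fderiv ℝ (fderiv ℝ (Function.uncurry h)) (a, b) (1, 0)) (0, 1) :=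
  (hasDerivAt_pd2_fst hC2 a b).deriv

lemma hasDerivAt_pd1_snd (hC2 : ContDiff ℝ 2 (Function.uncurry h)) (a b : ℝ) :
    HasDerivAt (fun t => pd1 h a t) (pd12 h a b) b := by
  have hF : ContDiff ℝ 1 (fderiv ℝ (Function.uncurry h)) :=
    hC2.fderiv_right (by norm_num)
  have hFd : DifferentiableAt ℝ (fderiv ℝ (Function.uncurry h)) (a, b) :=
    (hF.differentiable (by norm_num)).differentiableAt
  have h1 : HasDerivAt (fun t : ℝ => fderiv ℝ (Function.uncurry h) (a, t))
      (fderiv ℝ (fderiv ℝ (Function.uncurry h)) (a, b) (0, 1)) b :=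
    hFd.hasFDerivAt.comp_hasDerivAt b (curve2_hasDerivAt a b)
  have h2 := (ContinuousLinearMap.apply ℝ ℝ ((1 : ℝ), (0 : ℝ))).hasFDerivAt.comp_hasDerivAt b h1
  have h3 : HasDerivAt (fun t => pd1 h a t)
      ((fderiv ℝ (fderiv ℝ (Function.uncurry h)) (a, b) (0, 1)) (1, 0)) b :=
    h2.congr_of_eventuallyEq (Filter.Eventually.of_forall fun t => pd1_eq hC2 a t)
  have hsym : (fderiv ℝ (fderiv ℝ (Function.uncurry h)) (a, b) (0, 1)) (1, 0)
      = (fderiv ℝ (fderiv ℝ (Function.uncurry h)) (a, b) (1, 0)) (0, 1) := by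
    exact second_derivative_symmetric
      (fun y => ((hC2.differentiable (by norm_num)).differentiableAt).hasFDerivAt)
      hFd.hasFDerivAt _ _
  rw [hsym] at h3
  rw [pd12_eq hC2 a b]
  exact h3

lemma pd2_strictAnti (htwist : ∀ a b : ℝ, pd12 h a b < 0) (b : ℝ) :
    StrictAnti fun a => pd2 h a b :=
  strictAnti_of_deriv_neg fun a => htwist a b

lemma pd1_strictAnti (hC2 : ContDiff ℝ 2 (Function.uncurry h))
    (htwist : ∀ a b : ℝ, pd12 h a b < 0) (a : ℝ) :
    StrictAnti fun t => pd1 h a t :=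
  strictAnti_of_deriv_neg fun t => by
    rw [(hasDerivAt_pd1_snd hC2 a t).deriv]; exact htwist a t

end Aux

/-- Strong comparison of stationary states: two comparable distinct stationary
(p,q)-configurations are strictly ordered. -/
theorem strong_comparison_of_stationary
    (p : ℤ) (q : ℕ) (hq : 0 < q) (hpq : IsCoprime p (q : ℤ))
    (h : ℝ → ℝ → ℝ) (hC2 : ContDiff ℝ 2 (Function.uncurry h))
    (htwist : ∀ a b : ℝ, pd12 h a b < 0)
    (hper : ∀ a b : ℝ, h (a + 1) (b + 1) = h a b)
    (x z : ℤ → ℝ) (hx : IsConfig p q x) (hz : IsConfig p q z)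
    (hxs : Stationary h x) (hzs : Stationary h z)
    (hle : ∀ k : ℤ, x k ≤ z k) (hne : x ≠ z) :
    ∀ k : ℤ, x k < z k := by
  have hA2 : ∀ b, StrictAnti fun a => pd2 h a b := pd2_strictAnti htwist
  have hA1 : ∀ a, StrictAnti fun t => pd1 h a t := pd1_strictAnti hC2 htwist
  have prop : ∀ k : ℤ, x k = z k → x (k - 1) = z (k - 1) ∧ x (k + 1) = z (k + 1) := by
    intro k hk
    have e1 := hxs k
    have e2 := hzs k
    rw [← hk] at e2
    have l1 : pd2 h (z (k - 1)) (x k) ≤ pd2 h (x (k - 1)) (x k) :=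
      (hA2 (x k)).antitone (hle (k - 1))
    have l2 : pd1 h (x k) (z (k + 1)) ≤ pd1 h (x k) (x (k + 1)) :=
      (hA1 (x k)).antitone (hle (k + 1))
    constructor
    · by_contra hne1
      have hlt : x (k - 1) < z (k - 1) := lt_of_le_of_ne (hle _) hne1
      have : pd2 h (z (k - 1)) (x k) < pd2 h (x (k - 1)) (x k) := hA2 (x k) hlt
      linarith
    · by_contra hne1
      have hlt : x (k + 1) < z (k + 1) := lt_of_le_of_ne (hle _) hne1
      have : pd1 h (x k) (z (k + 1)) < pd1 h (x k) (x (k + 1)) := hA1 (x k) hlt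
      linarith
  intro k
  by_contra hnk
  have hk : x k = z k := le_antisymm (hle k) (le_of_not_gt hnk)
  have all : ∀ n : ℤ, x (k + n) = z (k + n) := by
    intro n
    induction n using Int.induction_on with
    | zero => simpa using hk
    | succ n ih =>
        have := (prop (k + n) ih).2
        have heq : k + (n + 1 : ℤ) = (k + n) + 1 := by ring
        rw [heq]; exact this
    | pred n ih =>
        have := (prop (k + (-n : ℤ)) ih).1
        have heq : k + (-(n : ℤ) - 1) = (k + (-n : ℤ)) - 1 := by ring
        rw [heq]; exact this
  apply hne
  funext m
  have := all (m - k)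
  have heq : k + (m - k) = m := by ring
  rwa [heq] at this
end

section
/- (Proposition 2.2, ordered part) Let x, x' ∈ X_pq with x ≺ x', and assume they are consecutive among translates in the following sense: for every (i,j) ∈ ℤ² not of the form (mq, -mp) with m ∈ ℤ, either τ_{ij}x' ≤ x or x' ≤ τ_{ij}x. Then every z ∈ X_pq with x ≺ z ≺ x' is cyclically ordered; moreover, for every (i,j) not of the form (mq,-mp), either τ_{ij}z ≺ z or z ≺ τ_{ij}z, while for (i,j) = (mq,-mp) one has τ_{ij}z = z. -/
/-- The translation τ_{ij} : (τ_{ij}x)_k = x_{k+i} + j. -/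
def tau (i j : ℤ) (x : ℤ → ℝ) : ℤ → ℝ := fun k => x (k + i) + (j : ℝ)

/-- Pointwise order on configurations. -/
def ConfLe (x y : ℤ → ℝ) : Prop := ∀ k : ℤ, x k ≤ y k

/-- Strict pointwise order on configurations. -/
def ConfLt (x y : ℤ → ℝ) : Prop := ∀ k : ℤ, x k < y k

/-- A configuration is cyclically ordered if it is comparable with all its
integer translates. -/
def CyclicallyOrdered (x : ℤ → ℝ) : Prop :=
  ∀ i j : ℤ, ConfLe (tau i j x) x ∨ ConfLe x (tau i j x)

lemma config_shift {p : ℤ} {q : ℕ} {z : ℤ → ℝ} (hz : IsConfig p q z) :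
    ∀ m k : ℤ, z (k + m * (q : ℤ)) = z k + (m : ℝ) * (p : ℝ) := by
  intro m
  induction m using Int.induction_on with
  | zero => intro k; simp
  | succ n ih =>
      intro k
      have h1 : k + ((n : ℤ) + 1) * (q : ℤ) = (k + n * (q : ℤ)) + (q : ℤ) := by ring
      rw [h1, hz (k + n * (q : ℤ)), ih k]
      push_cast; ring
  | pred n ih =>
      intro k
      have h1 : k + (-(n : ℤ)) * (q : ℤ) = (k + (-(n : ℤ) - 1) * (q : ℤ)) + (q : ℤ) := by ring
      have h2 := hz (k + (-(n : ℤ) - 1) * (q : ℤ))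
      have := ih k
      rw [h1, h2] at this
      push_cast at this ⊢
      have h3 : z (k + (-(n : ℤ) - 1) * (q : ℤ)) = z k + ((-(n : ℤ)) : ℝ) * (p : ℝ) - (p : ℝ) := by
        push_cast
        linarith
      rw [h3]; push_cast; ring

/-- Proposition 2.2 (ordered part): any configuration strictly between two
consecutive-among-translates configurations x ≺ x' is cyclically ordered, with
strict comparability for translations not of the form (mq, -mp), and invariance
for translations of that form. -/
theorem ordered_part_between_consecutive
    (p : ℤ) (q : ℕ) (hq : 0 < q) (hpq : IsCoprime p (q : ℤ))
    (x x' : ℤ → ℝ) (hx : IsConfig p q x) (hx' : IsConfig p q x')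
    (hlt : ConfLt x x')
    (hcons : ∀ i j : ℤ, (¬ ∃ m : ℤ, i = m * (q : ℤ) ∧ j = -(m * p)) →
      (ConfLe (tau i j x') x ∨ ConfLe x' (tau i j x)))
    (z : ℤ → ℝ) (hz : IsConfig p q z)
    (hxz : ConfLt x z) (hzx' : ConfLt z x') :
    CyclicallyOrdered z ∧
    (∀ i j : ℤ, (¬ ∃ m : ℤ, i = m * (q : ℤ) ∧ j = -(m * p)) →
      (ConfLt (tau i j z) z ∨ ConfLt z (tau i j z))) ∧
    (∀ m : ℤ, tau (m * (q : ℤ)) (-(m * p)) z = z) := by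
  have hfix : ∀ m : ℤ, tau (m * (q : ℤ)) (-(m * p)) z = z := by
    intro m; funext k
    simp only [tau]
    rw [config_shift hz m k]
    push_cast; ring
  have hstrict : ∀ i j : ℤ, (¬ ∃ m : ℤ, i = m * (q : ℤ) ∧ j = -(m * p)) →
      (ConfLt (tau i j z) z ∨ ConfLt z (tau i j z)) := by
    intro i j h
    rcases hcons i j h with h1 | h2
    · left; intro k
      have : tau i j z k < tau i j x' k := by
        simp only [tau]; have := hzx' (k + i); linarith
      calc tau i j z k < tau i j x' k := this
        _ ≤ x k := h1 k
        _ < z k := hxz k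
    · right; intro k
      have : tau i j x k < tau i j z k := by
        simp only [tau]; have := hxz (k + i); linarith
      calc z k < x' k := hzx' k
        _ ≤ tau i j x k := h2 k
        _ < tau i j z k := this
  refine ⟨?_, hstrict, hfix⟩
  intro i j
  by_cases h : ∃ m : ℤ, i = m * (q : ℤ) ∧ j = -(m * p)
  · obtain ⟨m, hi, hj⟩ := h
    subst hi; subst hj
    left; rw [hfix m]; intro k; exact le_rfl
  · rcases hstrict i j h with h1 | h2
    · left; intro k; exact (h1 k).le
    · right; intro k; exact (h2 k).le
end
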